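/- Let n ≥ 1 and ρ > 0. Suppose that for each k = 0,…,n there exist a polynomial q_k of exact degree k and a real number λ_k such that U_n^ρ q_k = λ_k q_k, with 1 = λ₀ = λ₁ ≥ λ₂ ≥ … ≥ λ_n > 0 and λ_k < 1 for k ≥ 2. Then for every f ∈ C[0,1], ⊕^M U_n^ρ f converges uniformly on [0,1], as M → ∞, to L_n^ρ f. -/

import Mathlib

open MeasureTheory

/-- Euler Beta function `B(a,b) = ∫₀¹ t^(a-1) (1-t)^(b-1) dt`. -/
noncomputable def betaFn (a b : ℝ) : ℝ :=
  ∫ t in (0:ℝ)..1, t ^ (a - 1) * (1 - t) ^ (b - 1)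

/-- The functionals `F_{n,k}^ρ`. -/
noncomputable def Ffun (n k : ℕ) (ρ : ℝ) (f : ℝ → ℝ) : ℝ :=
  if k = 0 then f 0
  else if k = n then f 1
  else (betaFn ((k : ℝ) * ρ) (((n : ℝ) - (k : ℝ)) * ρ))⁻¹ *
    ∫ t in (0:ℝ)..1, t ^ ((k : ℝ) * ρ - 1) * (1 - t) ^ (((n : ℝ) - (k : ℝ)) * ρ - 1) * f t

/-- Bernstein basis polynomial `p_{n,k}(x)`. -/
noncomputable def bern (n k : ℕ) (x : ℝ) : ℝ :=
  (n.choose k : ℝ) * x ^ k * (1 - x) ^ (n - k)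

/-- The operator `U_n^ρ`. -/
noncomputable def Uop (n : ℕ) (ρ : ℝ) (f : ℝ → ℝ) (x : ℝ) : ℝ :=
  ∑ k ∈ Finset.range (n + 1), Ffun n k ρ f * bern n k x

/-- The iterated Boolean sum `⊕^M U_n^ρ = I − (I − U_n^ρ)^M`. -/
noncomputable def boolSum (n : ℕ) (ρ : ℝ) (M : ℕ) (f : ℝ → ℝ) : ℝ → ℝ :=
  fun x => f x - ((fun (g : ℝ → ℝ) (y : ℝ) => g y - Uop n ρ g y)^[M] f) x

/-!
With `T = 1 - U_n^ρ`, the hypothesis on `L` says `F_{n,k}^ρ (f - L) = 0` for all `k`, so `U_n^ρ`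
annihilates `f - L`; hence `T^M f = T^M L + (f - L)` and `⊕^M U_n^ρ f = L - T^M L`. On polynomials
of degree `≤ n`, `T` is diagonal in the basis `1, q_1, …, q_n`: `T 1 = 0` because `U_n^ρ`
reproduces constants, and `T q_k = (1 - λ_k) q_k` with `0 ≤ 1 - λ_k < 1`. So `T^M L → 0`
uniformly on `[0,1]`.
-/

open Polynomial Set Filter Topology

theorem Polynomial.mem_span_range_of_degree_eq {K : Type*} [Field K] {n : ℕ}
    (q : Fin (n + 1) → K[X]) (hq : ∀ i, (q i).degree = (i : ℕ)) {p : K[X]}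
    (hp : p.natDegree ≤ n) : p ∈ Submodule.span K (range q) := by
  let S : Sequence K :=
    { elems' := fun i => if h : i < n + 1 then q ⟨i, h⟩ else X ^ i
      degree_eq' := fun i => by split_ifs; exacts [hq _, degree_X_pow i] }
  have hS : S '' Iic n ⊆ range q := by
    rintro _ ⟨i, hi, rfl⟩
    exact ⟨⟨i, Nat.lt_succ_of_le hi⟩, by simp [S, Nat.lt_succ_of_le hi]⟩
  refine Submodule.span_mono hS ?_
  rw [S.span_degreeLE fun i _ => (leadingCoeff_ne_zero.2 (S.ne_zero i)).isUnit]
  exact mem_degreeLE.2 (degree_le_of_natDegree_le hp)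

section OrbitTendstoZero

variable {R V W : Type*} [Semiring R] [AddCommMonoid V] [Module R V] [TopologicalSpace W]
  [AddCommMonoid W] [Module R W]

def orbitTendstoZero [ContinuousAdd W] [ContinuousConstSMul R W] (T : Module.End R V)
    (φ : V →ₗ[R] W) : Submodule R V where
  carrier := {v | Tendsto (fun M : ℕ => φ ((T ^ M) v)) atTop (𝓝 0)}
  add_mem' ha hb := by simpa using ha.add hb
  zero_mem' := by simpa using tendsto_const_nhds
  smul_mem' c _ hv := by simpa using hv.const_smul c

theorem mem_orbitTendstoZero_of_apply_eq_smul {𝕜 : Type*} [NormedField 𝕜] [Module 𝕜 V]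
    [Module 𝕜 W] [ContinuousAdd W] [ContinuousSMul 𝕜 W] {T : Module.End 𝕜 V} {φ : V →ₗ[𝕜] W}
    {r : 𝕜} (hr : ‖r‖ < 1) {v : V} (hv : T v = r • v) : v ∈ orbitTendstoZero T φ := by
  have hpow (M : ℕ) : (T ^ M) v = r ^ M • v := by
    induction M with
    | zero => simp
    | succ M ih => rw [pow_succ, Module.End.mul_apply, hv, map_smul, ih, smul_smul, ← pow_succ']
  show Tendsto _ _ _
  simpa [hpow] using (tendsto_pow_atTop_nhds_zero_of_norm_lt_one hr).smul_const (φ v)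

end OrbitTendstoZero

theorem Polynomial.tendstoUniformlyOn_eval_of_tendsto {ι : Type*} {l : Filter ι} {s : Set ℝ}
    [CompactSpace s] {P : ι → ℝ[X]} {p : ℝ[X]}
    (h : Tendsto (fun i => (P i).toContinuousMapOn s) l (𝓝 (p.toContinuousMapOn s))) :
    TendstoUniformlyOn (fun i x => (P i).eval x) (fun x => p.eval x) l s := by
  rw [tendstoUniformlyOn_iff_tendstoUniformly_comp_coe]
  exact ContinuousMap.tendsto_iff_tendstoUniformly.1 h

section BetaWeight

variable {a b : ℝ}

theorem intervalIntegrable_betaWeight (ha : 0 < a) (hb : 0 < b) :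
    IntervalIntegrable (fun t : ℝ => t ^ (a - 1) * (1 - t) ^ (b - 1)) volume 0 1 := by
  have hc := Complex.betaIntegral_convergent (u := a) (v := b) (by simpa) (by simpa)
  rw [intervalIntegrable_iff_integrableOn_Ioc_of_le zero_le_one] at hc ⊢
  refine IntegrableOn.congr_fun hc.re (fun t ht => ?_) measurableSet_Ioc
  have h1 : (0 : ℝ) ≤ 1 - t := by linarith [ht.2]
  simp only [RCLike.re_to_complex]
  rw [show (1 - (t : ℂ)) = ((1 - t : ℝ) : ℂ) by push_cast; ring,
    show ((a : ℂ) - 1) = ((a - 1 : ℝ) : ℂ) by push_cast; ring,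
    show ((b : ℂ) - 1) = ((b - 1 : ℝ) : ℂ) by push_cast; ring,
    ← Complex.ofReal_cpow ht.1.le, ← Complex.ofReal_cpow h1, ← Complex.ofReal_mul,
    Complex.ofReal_re]

theorem intervalIntegrable_betaWeight_mul (ha : 0 < a) (hb : 0 < b) {h : ℝ → ℝ}
    (hh : ContinuousOn h (Icc 0 1)) :
    IntervalIntegrable (fun t : ℝ => t ^ (a - 1) * (1 - t) ^ (b - 1) * h t)
      volume 0 1 :=
  (intervalIntegrable_betaWeight ha hb).mul_continuousOn (by rwa [uIcc_of_le zero_le_one])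

theorem betaFn_pos (ha : 0 < a) (hb : 0 < b) : 0 < betaFn a b :=
  intervalIntegral.intervalIntegral_pos_of_pos_on (intervalIntegrable_betaWeight ha hb)
    (fun t ht => mul_pos (Real.rpow_pos_of_pos ht.1 _)
      (Real.rpow_pos_of_pos (by linarith [ht.2]) _))
    zero_lt_one

end BetaWeight

section Functionals

variable {n k : ℕ} {ρ : ℝ} {u v : ℝ → ℝ}

theorem Ffun_exponents_pos (hρ : 0 < ρ) (hk : k ≤ n) (h0 : k ≠ 0) (hn : k ≠ n) :
    0 < (k : ℝ) * ρ ∧ 0 < ((n : ℝ) - k) * ρ := by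
  have h1 : (0 : ℝ) < k := by exact_mod_cast Nat.pos_of_ne_zero h0
  have h2 : (k : ℝ) < n := by exact_mod_cast lt_of_le_of_ne hk hn
  exact ⟨mul_pos h1 hρ, mul_pos (by linarith) hρ⟩

theorem Ffun_add (hρ : 0 < ρ) (hk : k ≤ n) (hu : ContinuousOn u (Icc 0 1))
    (hv : ContinuousOn v (Icc 0 1)) :
    Ffun n k ρ (fun x => u x + v x) = Ffun n k ρ u + Ffun n k ρ v := by
  unfold Ffun
  split_ifs with h0 hn
  · rfl
  · rfl
  obtain ⟨ha, hb⟩ := Ffun_exponents_pos hρ hk h0 hn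
  simp only [mul_add]
  rw [intervalIntegral.integral_add (intervalIntegrable_betaWeight_mul ha hb hu)
    (intervalIntegrable_betaWeight_mul ha hb hv), mul_add]

theorem Ffun_sub (hρ : 0 < ρ) (hk : k ≤ n) (hu : ContinuousOn u (Icc 0 1))
    (hv : ContinuousOn v (Icc 0 1)) :
    Ffun n k ρ (fun x => u x - v x) = Ffun n k ρ u - Ffun n k ρ v := by
  have h := Ffun_add (u := fun x => u x - v x) hρ hk (hu.sub hv) hv
  simp only [sub_add_cancel] at h
  linarith

theorem Ffun_const_mul (c : ℝ) (u : ℝ → ℝ) :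
    Ffun n k ρ (fun x => c * u x) = c * Ffun n k ρ u := by
  unfold Ffun
  split_ifs
  · rfl
  · rfl
  simp only [mul_left_comm _ c, intervalIntegral.integral_const_mul]

theorem Ffun_one (hρ : 0 < ρ) (hk : k ≤ n) : Ffun n k ρ (fun _ => 1) = 1 := by
  unfold Ffun
  split_ifs with h0 hn
  · rfl
  · rfl
  obtain ⟨ha, hb⟩ := Ffun_exponents_pos hρ hk h0 hn
  simp only [mul_one]
  exact inv_mul_cancel₀ (betaFn_pos ha hb).ne'

theorem Uop_congr (h : ∀ k ≤ n, Ffun n k ρ u = Ffun n k ρ v) : Uop n ρ u = Uop n ρ v := by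
  funext x
  exact Finset.sum_congr rfl fun k hk => by rw [h k (Finset.mem_range_succ_iff.1 hk)]

theorem Uop_add_sub_of_Ffun_eq (hρ : 0 < ρ) {g : ℝ → ℝ} (hg : ContinuousOn g (Icc 0 1))
    (hu : ContinuousOn u (Icc 0 1)) (hv : ContinuousOn v (Icc 0 1))
    (huv : ∀ k ≤ n, Ffun n k ρ u = Ffun n k ρ v) :
    Uop n ρ (fun x => g x + (u x - v x)) = Uop n ρ g :=
  Uop_congr fun k hk => by
    rw [Ffun_add (v := fun x => u x - v x) hρ hk hg (hu.sub hv), Ffun_sub hρ hk hu hv, huv k hk,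
      sub_self, add_zero]

end Functionals

noncomputable def Upoly (n : ℕ) {ρ : ℝ} (hρ : 0 < ρ) : Module.End ℝ ℝ[X] where
  toFun p :=
    ∑ k ∈ Finset.range (n + 1), C (Ffun n k ρ fun t => p.eval t) * bernsteinPolynomial ℝ n k
  map_add' p r := by
    rw [← Finset.sum_add_distrib]
    refine Finset.sum_congr rfl fun k hk => ?_
    simp only [eval_add, Ffun_add hρ (Finset.mem_range_succ_iff.1 hk) p.continuousOn
      r.continuousOn, C_add, add_mul]
  map_smul' c p := by
    simp only [eval_smul, smul_eq_mul, Ffun_const_mul, C_mul, RingHom.id_apply, Finset.smul_sum]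
    simp only [smul_eq_C_mul, mul_assoc]

section Upoly

variable {n : ℕ} {ρ : ℝ} (hρ : 0 < ρ)

theorem Upoly_eval (p : ℝ[X]) (x : ℝ) :
    (Upoly n hρ p).eval x = Uop n ρ (fun t => p.eval t) x := by
  simp [Upoly, Uop, eval_finsetSum, bern, bernsteinPolynomial]

theorem Upoly_one : Upoly n hρ 1 = 1 := by
  have h (k : ℕ) (hk : k ∈ Finset.range (n + 1)) :
      C (Ffun n k ρ fun t => (1 : ℝ[X]).eval t) * bernsteinPolynomial ℝ n k
        = bernsteinPolynomial ℝ n k := by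
    simp [Ffun_one hρ (Finset.mem_range_succ_iff.1 hk)]
  exact (Finset.sum_congr rfl h).trans (bernsteinPolynomial.sum ℝ n)

theorem Upoly_eq_smul_of_Uop_eq {q : ℝ[X]} {c : ℝ}
    (h : ∀ x, Uop n ρ (fun t => q.eval t) x = c * q.eval x) : Upoly n hρ q = c • q :=
  Polynomial.funext fun x => by rw [Upoly_eval, h, eval_smul, smul_eq_mul]

end Upoly

theorem boolSum_eq_eval_sub {n : ℕ} {ρ : ℝ} (hρ : 0 < ρ) {f : ℝ → ℝ}
    (hf : ContinuousOn f (Icc 0 1)) {L : ℝ[X]}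
    (hL : ∀ k ≤ n, Ffun n k ρ (fun x => L.eval x) = Ffun n k ρ f) (M : ℕ) :
    boolSum n ρ M f = fun x => (L - ((1 - Upoly n hρ) ^ M) L).eval x := by
  set φ : ℝ[X] → ℝ → ℝ := fun p x => p.eval x + (f x - L.eval x)
  have hconj : Function.Semiconj φ ⇑(1 - Upoly n hρ : Module.End ℝ ℝ[X])
      fun g y => g y - Uop n ρ g y := by
    intro p
    funext y
    simp only [φ, Uop_add_sub_of_Ffun_eq hρ p.continuousOn hf L.continuousOn
      fun k hk => (hL k hk).symm, LinearMap.sub_apply, Module.End.one_apply, eval_sub, Upoly_eval]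
    ring
  have hφL : φ L = f := by
    funext x
    simp only [φ]
    ring
  funext x
  rw [boolSum, ← hφL, ← hconj.iterate_right M L, Module.End.pow_apply]
  simp only [φ, eval_sub]
  ring

theorem mem_orbitTendstoZero_one_sub_Upoly {n : ℕ} {ρ : ℝ} (hρ : 0 < ρ)
    {q : Fin (n + 1) → ℝ[X]} {lam : Fin (n + 1) → ℝ} (hdeg : ∀ k, (q k).natDegree = (k : ℕ))
    (heig : ∀ k, ∀ x : ℝ, Uop n ρ (fun t => (q k).eval t) x = lam k * (q k).eval x)
    (hlam : ∀ k : Fin (n + 1), 1 ≤ (k : ℕ) → ‖1 - lam k‖ < 1) {p : ℝ[X]}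
    (hp : p.natDegree ≤ n) :
    p ∈ orbitTendstoZero (1 - Upoly n hρ)
      (toContinuousMapOnAlgHom (Icc (0 : ℝ) 1)).toLinearMap := by
  -- `hdeg` allows `q 0 = 0`; the constant `1`, which `U_n^ρ` reproduces, takes its place.
  have hdeg_update (k : Fin (n + 1)) : (Function.update q 0 1 k).degree = (k : ℕ) := by
    rcases eq_or_ne k 0 with rfl | hk
    · simp
    · rw [Function.update_of_ne hk,
        degree_eq_iff_natDegree_eq_of_pos (Fin.pos_iff_ne_zero.2 hk), hdeg]
  refine Submodule.span_le.2 ?_ (mem_span_range_of_degree_eq _ hdeg_update hp)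
  rintro _ ⟨k, rfl⟩
  rcases eq_or_ne k 0 with rfl | hk
  · refine mem_orbitTendstoZero_of_apply_eq_smul (r := (0 : ℝ)) (by simp) ?_
    simp [Upoly_one]
  · rw [Function.update_of_ne hk]
    refine mem_orbitTendstoZero_of_apply_eq_smul (hlam k (Fin.pos_iff_ne_zero.2 hk)) ?_
    simp [Upoly_eq_smul_of_Uop_eq hρ (heig k), sub_smul]

theorem boolSum_tendsto_L_general (n : ℕ) (ρ : ℝ) (hρ : 0 < ρ)
    (q : Fin (n + 1) → Polynomial ℝ) (lam : Fin (n + 1) → ℝ)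
    (hdeg : ∀ k, (q k).natDegree = (k : ℕ))
    (heig : ∀ k, ∀ x : ℝ, Uop n ρ (fun t => (q k).eval t) x = lam k * (q k).eval x)
    (hlam1 : lam 1 = 1)
    (hlamanti : ∀ j k : Fin (n + 1), 1 ≤ (j : ℕ) → j ≤ k → lam k ≤ lam j)
    (hlampos : 0 < lam (Fin.last n))
    (f : ℝ → ℝ) (hf : ContinuousOn f (Set.Icc 0 1))
    (L : Polynomial ℝ) (hLdeg : L.natDegree ≤ n)
    (hL : ∀ k ≤ n, Ffun n k ρ (fun x => L.eval x) = Ffun n k ρ f) :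
    TendstoUniformlyOn (fun (M : ℕ) (x : ℝ) => boolSum n ρ M f x)
      (fun x => L.eval x) Filter.atTop (Set.Icc 0 1) := by
  have hlam (k : Fin (n + 1)) (hk : 1 ≤ (k : ℕ)) : ‖1 - lam k‖ < 1 := by
    have hone : ((1 : Fin (n + 1)) : ℕ) = 1 := by
      rw [Fin.val_one', Nat.mod_eq_of_lt (by omega)]
    have hle := hlamanti 1 k hone.ge (Fin.le_def.2 (by omega))
    have hpos := hlamanti k (Fin.last n) hk (Fin.le_last k)
    rw [Real.norm_eq_abs, abs_lt]
    constructor <;> linarith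
  have hmem := mem_orbitTendstoZero_one_sub_Upoly hρ hdeg heig hlam hLdeg
  simp_rw [boolSum_eq_eval_sub hρ hf hL]
  refine tendstoUniformlyOn_eval_of_tendsto ?_
  simp only [← toContinuousMapOnAlgHom_apply, map_sub]
  simpa only [sub_zero, AlgHom.toLinearMap_apply] using tendsto_const_nhds.sub hmem

/-- Let `n ≥ 1`, `ρ > 0`, and suppose `U_n^ρ` has eigenpolynomials `q_k` of exact
degree `k` with eigenvalues `1 = λ₀ = λ₁ ≥ λ₂ ≥ … ≥ λ_n > 0` and `λ_k < 1` for
`k ≥ 2`. Then for every continuous `f`, `⊕^M U_n^ρ f → L_n^ρ f` uniformly on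
`[0,1]` as `M → ∞`. -/
theorem boolSum_tendsto_L (n : ℕ) (hn : 1 ≤ n) (ρ : ℝ) (hρ : 0 < ρ)
    (q : Fin (n + 1) → Polynomial ℝ) (lam : Fin (n + 1) → ℝ)
    (hdeg : ∀ k, (q k).natDegree = (k : ℕ))
    (heig : ∀ k, ∀ x : ℝ, Uop n ρ (fun t => (q k).eval t) x = lam k * (q k).eval x)
    (hlam0 : lam 0 = 1) (hlam1 : lam 1 = 1)
    (hlamanti : ∀ j k : Fin (n + 1), 1 ≤ (j : ℕ) → j ≤ k → lam k ≤ lam j)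
    (hlamlt : ∀ k : Fin (n + 1), 2 ≤ (k : ℕ) → lam k < 1)
    (hlampos : 0 < lam (Fin.last n))
    (f : ℝ → ℝ) (hf : ContinuousOn f (Set.Icc 0 1))
    (L : Polynomial ℝ) (hLdeg : L.natDegree ≤ n)
    (hL : ∀ k ≤ n, Ffun n k ρ (fun x => L.eval x) = Ffun n k ρ f) :
    TendstoUniformlyOn (fun (M : ℕ) (x : ℝ) => boolSum n ρ M f x)
      (fun x => L.eval x) Filter.atTop (Set.Icc 0 1) :=
  boolSum_tendsto_L_general n ρ hρ q lam hdeg heig hlam1 hlamanti hlampos f hf L hLdeg hL
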